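/- arXiv:2110.09210 — 7 statements merged into one kernel-verified Lean document; each statement's English description precedes it below -/
import Mathlib

section
/- Let Φ satisfy Φ = 0 on (-∞,0], Φ = 1 on [θ₂,∞), Φ nondecreasing, Φ(θ₁) > 0, with 0 < θ₁ < θ₂. Then the function v: ℝ → ℝ implicitly defined by ∫_{θ₁}^{v(x)} dw/√(Φ(w)) = x is a positive, increasing, convex solution of v'' = (1/2)Φ'(v) with v(0) = θ₁, v'(x) → 1 as x → +∞, and v(x) → 0 as x → −∞. -/
/-!
Put `g = Φ^{-1/2}` and `F t = ∫_{θ₁}^t g`. Since `Φ' > 0` on `(0, θ₁]`, `Φ > 0` on `(0, ∞)`,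
so `F` is strictly increasing there and `v` is its inverse; hence `v' = 1 / g(v) = √Φ(v)`, which
is monotone (convexity) and differentiates to `v'' = Φ'(v) / 2`. The bound `Φ w ≤ c₁ w²` near `0`
gives `g w ≥ 1 / (√c₁ w)`, so `F t → -∞` as `t → 0⁺`: this keeps `v` positive and makes `v → 0`
at `-∞`. Finally `Φ = 1` on `[θ₂, ∞)`, so `v' = 1` as soon as `v ≥ θ₂`.
-/

open Real Set Filter intervalIntegral Topology

lemma inv_sqrt_mul_inv_le_inv_sqrt {a c w : ℝ} (hc : 0 ≤ c) (hw : 0 ≤ w) (ha : 0 < a)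
    (h : a ≤ c * w ^ 2) : (√c)⁻¹ * w⁻¹ ≤ (√a)⁻¹ := by
  rw [← mul_inv, ← sqrt_sq hw, ← sqrt_mul hc]
  exact inv_anti₀ (sqrt_pos.2 ha) (sqrt_le_sqrt h)

section Phi

variable {Φ : ℝ → ℝ} {θ c : ℝ}

lemma pos_of_deriv_pos_of_monotone (hθ : 0 < θ) (hdiff : Differentiable ℝ Φ) (h0 : Φ 0 = 0)
    (hmono : Monotone Φ) (hderiv : ∀ s ∈ Ioo 0 θ, 0 < deriv Φ s) {w : ℝ} (hw : 0 < w) :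
    0 < Φ w := by
  have hstrict : StrictMonoOn Φ (Icc 0 θ) :=
    strictMonoOn_of_deriv_pos (convex_Icc 0 θ) hdiff.continuous.continuousOn
      (by simpa only [interior_Icc] using hderiv)
  calc 0 = Φ 0 := h0.symm
    _ < Φ (min w θ) :=
      hstrict ⟨le_rfl, hθ.le⟩ ⟨(lt_min hw hθ).le, min_le_right _ _⟩ (lt_min hw hθ)
    _ ≤ Φ w := hmono (min_le_left _ _)

lemma le_mul_sq_of_deriv_le (hdiff : Differentiable ℝ Φ) (h0 : Φ 0 = 0)
    (hderiv : ∀ s ∈ Icc 0 θ, deriv Φ s ≤ 2 * c * s) {w : ℝ} (hw : w ∈ Icc 0 θ) :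
    Φ w ≤ c * w ^ 2 := by
  have hgap : ∀ s, HasDerivAt (fun s => c * s ^ 2 - Φ s) (2 * c * s - deriv Φ s) s := fun s => by
    refine (((hasDerivAt_pow 2 s).const_mul c).fun_sub (hdiff s).hasDerivAt).congr_deriv ?_
    norm_num
    ring
  have hmono : MonotoneOn (fun s => c * s ^ 2 - Φ s) (Icc 0 θ) := by
    refine monotoneOn_of_deriv_nonneg (convex_Icc 0 θ)
      (fun s _ => (hgap s).continuousAt.continuousWithinAt)
      (fun s _ => (hgap s).differentiableAt.differentiableWithinAt) fun s hs => ?_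
    rw [interior_Icc] at hs
    rw [(hgap s).deriv, sub_nonneg]
    exact hderiv s (Ioo_subset_Icc_self hs)
  have := hmono ⟨le_rfl, hw.1.trans hw.2⟩ hw hw.1
  simp only [h0] at this
  linarith

lemma hasDerivAt_sqrt_comp_of_hasDerivAt {v : ℝ → ℝ} (hΦ : Differentiable ℝ Φ)
    (hv : ∀ x, HasDerivAt v (√(Φ (v x))) x) {x : ℝ} (hx : 0 < Φ (v x)) :
    HasDerivAt (fun y => √(Φ (v y))) ((1 / 2) * deriv Φ (v x)) x := by
  refine (((hΦ (v x)).hasDerivAt.comp x (hv x)).sqrt hx.ne').congr_deriv ?_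
  have := (sqrt_pos.2 hx).ne'
  simp only [Function.comp_apply]
  field_simp

end Phi

section InversePrimitive

variable {g v : ℝ → ℝ} {θ : ℝ}

lemma intervalIntegrable_of_continuousOn_Ioi (hg : ContinuousOn g (Ioi 0)) {a b : ℝ}
    (ha : 0 < a) (hb : 0 < b) : IntervalIntegrable g MeasureTheory.volume a b :=
  (hg.mono fun _ hw => lt_of_lt_of_le (lt_min ha hb) hw.1).intervalIntegrable

lemma strictMonoOn_integral_of_pos (hθ : 0 < θ) (hg : ContinuousOn g (Ioi 0))
    (hg_pos : ∀ w, 0 < w → 0 < g w) : StrictMonoOn (fun t => ∫ w in θ..t, g w) (Ioi 0) := by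
  intro s hs t ht hst
  have hsplit : (∫ w in θ..s, g w) + ∫ w in s..t, g w = ∫ w in θ..t, g w :=
    integral_add_adjacent_intervals (intervalIntegrable_of_continuousOn_Ioi hg hθ hs)
      (intervalIntegrable_of_continuousOn_Ioi hg hs ht)
  have hpos : 0 < ∫ w in s..t, g w :=
    intervalIntegral_pos_of_pos_on (intervalIntegrable_of_continuousOn_Ioi hg hs ht)
      (fun w hw => hg_pos w (hs.trans hw.1)) hst
  simp only
  linarith

lemma tendsto_integral_nhdsGT_zero_atBot_of_inv_le (hθ : 0 < θ) (hg : ContinuousOn g (Ioi 0))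
    {c : ℝ} (hc : 0 < c) (hg_ge : ∀ w ∈ Ioc 0 θ, c * w⁻¹ ≤ g w) :
    Tendsto (fun s => ∫ w in θ..s, g w) (𝓝[>] 0) atBot := by
  have hlog : Tendsto (fun s => c * (log s - log θ)) (𝓝[>] 0) atBot :=
    (tendsto_atBot_add_const_right _ _ tendsto_log_nhdsGT_zero).const_mul_atBot hc
  refine tendsto_atBot_mono' _ ?_ hlog
  filter_upwards [Ioo_mem_nhdsGT hθ] with s hs
  have hinv : ContinuousOn (fun w => c * w⁻¹) (uIcc s θ) := by
    rw [uIcc_of_le hs.2.le]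
    exact continuousOn_const.mul (continuousOn_inv₀.mono fun w hw => (hs.1.trans_le hw.1).ne')
  have hle : ∫ w in s..θ, c * w⁻¹ ≤ ∫ w in s..θ, g w :=
    integral_mono_on hs.2.le hinv.intervalIntegrable
      (intervalIntegrable_of_continuousOn_Ioi hg hs.1 hθ)
      fun w hw => hg_ge w ⟨hs.1.trans_le hw.1, hw.2⟩
  rw [integral_const_mul, integral_inv (notMem_uIcc_of_lt hs.1 hθ), log_div hθ.ne' hs.1.ne']
    at hle
  rw [integral_symm]
  linarith

lemma not_intervalIntegrable_of_tendsto_atBot (hθ : 0 < θ)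
    (hdiv : Tendsto (fun s => ∫ w in θ..s, g w) (𝓝[>] 0) atBot) {t : ℝ} (ht : t ≤ 0) :
    ¬ IntervalIntegrable g MeasureTheory.volume θ t := by
  intro hint
  have hcont : ContinuousWithinAt (fun s => ∫ w in θ..s, g w) (uIcc θ t) 0 :=
    continuousOn_primitive_interval' hint left_mem_uIcc 0
      (by rw [uIcc_of_ge (ht.trans hθ.le)]; exact ⟨ht, hθ.le⟩)
  refine not_tendsto_nhds_of_tendsto_atBot hdiv _ (hcont.tendsto.mono_left ?_)
  rw [uIcc_of_ge (ht.trans hθ.le)]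
  exact nhdsWithin_le_of_mem (mem_of_superset (Icc_mem_nhdsGT hθ) (Icc_subset_Icc_left ht))

lemma pos_of_integral_eq (hθ : 0 < θ)
    (hdiv : Tendsto (fun s => ∫ w in θ..s, g w) (𝓝[>] 0) atBot)
    (hv_cont : Continuous v) (hv : ∀ x, ∫ w in θ..v x, g w = x) (x : ℝ) : 0 < v x := by
  -- Where `v x ≤ 0` the integral is undefined, and its junk value `0` forces `x = 0`.
  have hpos_of_ne : ∀ x ≠ 0, 0 < v x := fun x hx => by
    by_contra! hle
    exact hx ((hv x).symm.trans
      (integral_undef (not_intervalIntegrable_of_tendsto_atBot hθ hdiv hle)))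
  rcases eq_or_ne x 0 with rfl | hx
  · by_contra! hle
    have hv_within : Tendsto v (𝓝[>] 0) (𝓝 (v 0)) := hv_cont.continuousWithinAt.tendsto
    have hv_right : ∀ᶠ x in 𝓝[>] 0, 0 < v x :=
      eventually_nhdsWithin_of_forall fun x hx => hpos_of_ne x hx.ne'
    have hv0 : v 0 = 0 :=
      le_antisymm hle (ge_of_tendsto hv_within (hv_right.mono fun _ h => h.le))
    have hv_tendsto : Tendsto v (𝓝[>] 0) (𝓝[>] 0) :=
      tendsto_nhdsWithin_iff.2 ⟨by rwa [hv0] at hv_within, hv_right⟩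
    have hid : Tendsto (fun x => x) (𝓝[>] (0 : ℝ)) atBot := by
      simpa only [Function.comp_def, hv] using hdiv.comp hv_tendsto
    obtain ⟨y, hy_neg, hy_pos⟩ :=
      ((hid.eventually (eventually_lt_atBot 0)).and self_mem_nhdsWithin).exists
    exact lt_asymm hy_neg hy_pos
  · exact hpos_of_ne x hx

lemma le_iff_integral_le (hθ : 0 < θ) (hg : ContinuousOn g (Ioi 0))
    (hg_pos : ∀ w, 0 < w → 0 < g w) (hv : ∀ x, ∫ w in θ..v x, g w = x)
    (hv_pos : ∀ x, 0 < v x) {b : ℝ} (hb : 0 < b) (x : ℝ) :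
    b ≤ v x ↔ ∫ w in θ..b, g w ≤ x := by
  conv_rhs => rw [← hv x]
  exact ((strictMonoOn_integral_of_pos hθ hg hg_pos).le_iff_le hb (hv_pos x)).symm

lemma eventually_le_of_integral_eq (hθ : 0 < θ) (hg : ContinuousOn g (Ioi 0))
    (hg_pos : ∀ w, 0 < w → 0 < g w) (hv : ∀ x, ∫ w in θ..v x, g w = x)
    (hv_pos : ∀ x, 0 < v x) {b : ℝ} (hb : 0 < b) : ∀ᶠ x in atTop, b ≤ v x := by
  filter_upwards [eventually_ge_atTop (∫ w in θ..b, g w)] with x hx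
  exact (le_iff_integral_le hθ hg hg_pos hv hv_pos hb x).2 hx

lemma tendsto_atBot_of_integral_eq (hθ : 0 < θ) (hg : ContinuousOn g (Ioi 0))
    (hg_pos : ∀ w, 0 < w → 0 < g w) (hv : ∀ x, ∫ w in θ..v x, g w = x)
    (hv_pos : ∀ x, 0 < v x) : Tendsto v atBot (𝓝 0) := by
  refine tendsto_order.2 ⟨fun a ha => Eventually.of_forall fun x => ha.trans (hv_pos x),
    fun a ha => ?_⟩
  filter_upwards [eventually_lt_atBot (∫ w in θ..a, g w)] with x hx
  exact lt_of_not_ge fun h => ((le_iff_integral_le hθ hg hg_pos hv hv_pos ha x).1 h).not_gt hx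

lemma strictMono_of_integral_eq (hθ : 0 < θ) (hg : ContinuousOn g (Ioi 0))
    (hg_pos : ∀ w, 0 < w → 0 < g w) (hv : ∀ x, ∫ w in θ..v x, g w = x)
    (hv_pos : ∀ x, 0 < v x) : StrictMono v := fun x y hxy => by
  have := (strictMonoOn_integral_of_pos hθ hg hg_pos).lt_iff_lt (hv_pos x) (hv_pos y)
  simp only [hv] at this
  exact this.1 hxy

lemma apply_zero_of_integral_eq (hθ : 0 < θ) (hg : ContinuousOn g (Ioi 0))
    (hg_pos : ∀ w, 0 < w → 0 < g w) (hv : ∀ x, ∫ w in θ..v x, g w = x)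
    (hv_pos : ∀ x, 0 < v x) : v 0 = θ :=
  (strictMonoOn_integral_of_pos hθ hg hg_pos).injOn (hv_pos 0) hθ
    ((hv 0).trans integral_same.symm)

lemma hasDerivAt_of_integral_eq (hθ : 0 < θ) (hg : ContinuousOn g (Ioi 0))
    (hg_pos : ∀ w, 0 < w → 0 < g w) (hv_cont : Continuous v) (hv : ∀ x, ∫ w in θ..v x, g w = x)
    (hv_pos : ∀ x, 0 < v x) (x : ℝ) : HasDerivAt v (g (v x))⁻¹ x := by
  have hF : HasDerivAt (fun t => ∫ w in θ..t, g w) (g (v x)) (v x) :=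
    integral_hasDerivAt_right (intervalIntegrable_of_continuousOn_Ioi hg hθ (hv_pos x))
      (hg.stronglyMeasurableAtFilter isOpen_Ioi _ (hv_pos x))
      (hg.continuousAt (Ioi_mem_nhds (hv_pos x)))
  exact hF.of_local_left_inverse hv_cont.continuousAt (hg_pos _ (hv_pos x)).ne'
    (Eventually.of_forall hv)

end InversePrimitive

theorem statement2_general
    (Φ : ℝ → ℝ) (θ₁ θ₂ c₁ : ℝ)
    (hθ₁ : 0 < θ₁) (hθ₁₂ : θ₁ < θ₂) (hc₁ : 0 < c₁)
    (hΦreg : ContDiff ℝ 1 Φ)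
    (hΦ0 : ∀ t ≤ (0:ℝ), Φ t = 0)
    (hΦ1 : ∀ t, θ₂ ≤ t → Φ t = 1)
    (hΦmono : Monotone Φ)
    (hΦ' : ∀ s ∈ Icc (0:ℝ) θ₁,
        (1/c₁) * s ≤ (1/2) * deriv Φ s ∧ (1/2) * deriv Φ s ≤ c₁ * s)
    (v : ℝ → ℝ) (hvcont : Continuous v)
    (hvimp : ∀ x : ℝ, ∫ w in θ₁..(v x), (Real.sqrt (Φ w))⁻¹ = x) :
    (∀ x, 0 < v x) ∧ StrictMono v ∧ ConvexOn ℝ univ v ∧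
      (∀ x, deriv (deriv v) x = (1/2) * deriv Φ (v x)) ∧
      v 0 = θ₁ ∧
      Tendsto (deriv v) atTop (nhds 1) ∧
      Tendsto v atBot (nhds 0) := by
  set g : ℝ → ℝ := fun w => (√(Φ w))⁻¹
  have hΦdiff : Differentiable ℝ Φ := hΦreg.differentiable one_ne_zero
  have hΦpos : ∀ w, 0 < w → 0 < Φ w := fun w =>
    pos_of_deriv_pos_of_monotone hθ₁ hΦdiff (hΦ0 0 le_rfl) hΦmono fun s hs => by
      have : 0 < 1 / c₁ * s := by have := hs.1; positivity
      linarith [(hΦ' s (Ioo_subset_Icc_self hs)).1]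
  have hg_cont : ContinuousOn g (Ioi 0) := fun w hw =>
    ((continuous_sqrt.comp hΦdiff.continuous).continuousAt.inv₀
      (sqrt_pos.2 (hΦpos w hw)).ne').continuousWithinAt
  have hg_pos : ∀ w, 0 < w → 0 < g w := fun w hw => inv_pos.2 (sqrt_pos.2 (hΦpos w hw))
  have hg_ge : ∀ w ∈ Ioc 0 θ₁, (√c₁)⁻¹ * w⁻¹ ≤ g w := fun w hw =>
    inv_sqrt_mul_inv_le_inv_sqrt hc₁.le hw.1.le (hΦpos w hw.1) <|
      le_mul_sq_of_deriv_le hΦdiff (hΦ0 0 le_rfl) (fun s hs => by linarith [(hΦ' s hs).2])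
        (Ioc_subset_Icc_self hw)
  have hv_pos := pos_of_integral_eq hθ₁
    (tendsto_integral_nhdsGT_zero_atBot_of_inv_le hθ₁ hg_cont (by positivity) hg_ge) hvcont hvimp
  have hv_deriv : ∀ x, HasDerivAt v (√(Φ (v x))) x := fun x => by
    simpa only [g, inv_inv] using hasDerivAt_of_integral_eq hθ₁ hg_cont hg_pos hvcont hvimp hv_pos x
  have hdv : deriv v = fun x => √(Φ (v x)) := funext fun x => (hv_deriv x).deriv
  have hv_mono := strictMono_of_integral_eq hθ₁ hg_cont hg_pos hvimp hv_pos
  refine ⟨hv_pos, hv_mono, ?_, fun x => ?_,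
    apply_zero_of_integral_eq hθ₁ hg_cont hg_pos hvimp hv_pos, ?_,
    tendsto_atBot_of_integral_eq hθ₁ hg_cont hg_pos hvimp hv_pos⟩
  · refine Monotone.convexOn_univ_of_deriv (fun x => (hv_deriv x).differentiableAt) ?_
    rw [hdv]
    exact fun x y hxy => sqrt_le_sqrt (hΦmono (hv_mono.monotone hxy))
  · rw [hdv]
    exact (hasDerivAt_sqrt_comp_of_hasDerivAt hΦdiff hv_deriv (hΦpos _ (hv_pos x))).deriv
  · refine tendsto_const_nhds.congr' ?_
    filter_upwards [eventually_le_of_integral_eq hθ₁ hg_cont hg_pos hvimp hv_pos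
      (hθ₁.trans hθ₁₂)] with x hx
    rw [(hv_deriv x).deriv, hΦ1 _ hx, sqrt_one]

/-- the function v implicitly defined by ∫_{θ₁}^{v(x)} dw/√Φ(w) = x is a
positive, increasing, convex solution of v'' = (1/2)Φ'(v) with v(0) = θ₁,
v'(x) → 1 as x → +∞ and v(x) → 0 as x → −∞. -/
theorem statement2
    (Φ : ℝ → ℝ) (θ₁ θ₂ c₁ : ℝ)
    (hθ₁ : 0 < θ₁) (hθ₁₂ : θ₁ < θ₂) (hc₁ : 0 < c₁)
    (hΦreg : ContDiff ℝ 1 Φ)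
    (hΦ0 : ∀ t ≤ (0:ℝ), Φ t = 0)
    (hΦ1 : ∀ t, θ₂ ≤ t → Φ t = 1)
    (hΦmono : Monotone Φ)
    (hΦθ₁ : 0 < Φ θ₁)
    (hΦ' : ∀ s ∈ Icc (0:ℝ) θ₁,
        (1/c₁) * s ≤ (1/2) * deriv Φ s ∧ (1/2) * deriv Φ s ≤ c₁ * s)
    (v : ℝ → ℝ) (hvcont : Continuous v)
    (hvimp : ∀ x : ℝ, ∫ w in θ₁..(v x), (Real.sqrt (Φ w))⁻¹ = x) :
    (∀ x, 0 < v x) ∧ StrictMono v ∧ ConvexOn ℝ univ v ∧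
      (∀ x, deriv (deriv v) x = (1/2) * deriv Φ (v x)) ∧
      v 0 = θ₁ ∧
      Tendsto (deriv v) atTop (nhds 1) ∧
      Tendsto v atBot (nhds 0) :=
  statement2_general Φ θ₁ θ₂ c₁ hθ₁ hθ₁₂ hc₁ hΦreg hΦ0 hΦ1 hΦmono hΦ' v hvcont hvimp
end

section
/- Let u be a convex C² solution of u'' = (1/2)Φ'(u) on ℝ with u(0) = θ₁, u'(x) → 1 + t as x → +∞ for some t > 0, and u(x) → −∞ as x → −∞. Then u'(x) → √(2t + t²) as x → −∞. Moreover if x_t denotes the unique root of u, then x_t ≥ −√(2c₁)·log(1 + θ₁/t). -/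
open Real Set Filter Topology

/-!
Convexity and `u → -∞` force `u' > 0`, so once `u ≤ 0` the conservation law reads
`(u')² = (1+t)² - 1` and pins `u'` to `√(2t+t²)`; strict monotonicity gives the unique root.
Between the root `x` and `0` we have `u ∈ [0, θ₁]`, where integrating the lower bound on `Φ'`
gives `Φ(u) ≥ u²/c₁`, hence `u' ≥ √(T² + u²/c₁) ≥ (u + √c₁ T)/√(2c₁)` with `T = √(2t+t²)`.
Integrating this linear differential inequality for `log (u + √c₁ T)` over `[x, 0]` and using
`√c₁ T ≥ t` (note `c₁ ≥ 1`, by the two bounds on `Φ'` at `θ₁`) yields the estimate.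
-/

theorem ConvexOn.deriv_pos_of_tendsto_atBot {f : ℝ → ℝ} (hf : ConvexOn ℝ univ f)
    (hd : Differentiable ℝ f) (hbot : Tendsto f atBot atBot) (x : ℝ) : 0 < deriv f x := by
  obtain ⟨z, hfz, hzx⟩ : ∃ z, f z < f x ∧ z < x :=
    ((hbot.eventually (eventually_lt_atBot (f x))).and (eventually_lt_atBot x)).exists
  obtain ⟨c, hc, hslope⟩ :=
    exists_deriv_eq_slope f hzx hd.continuous.continuousOn hd.differentiableOn
  calc 0 < (f x - f z) / (x - z) := div_pos (sub_pos.2 hfz) (sub_pos.2 hzx)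
    _ = deriv f c := hslope.symm
    _ ≤ deriv f x := hf.monotoneOn_deriv (fun y _ => hd y) trivial trivial hc.2.le

theorem tendsto_deriv_atBot_of_conservation {Φ u : ℝ → ℝ} {E : ℝ}
    (hΦ0 : ∀ s ≤ (0 : ℝ), Φ s = 0) (hbot : Tendsto u atBot atBot) (hpos : ∀ x, 0 < deriv u x)
    (hE : ∀ x, deriv u x ^ 2 - Φ (u x) = E) : Tendsto (deriv u) atBot (𝓝 √E) := by
  refine tendsto_const_nhds.congr' ?_
  filter_upwards [hbot.eventually (eventually_le_atBot 0)] with x hx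
  rw [← hE x, hΦ0 _ hx, sub_zero, sqrt_sq (hpos x).le]

theorem StrictMono.existsUnique_eq_zero {f : ℝ → ℝ} (hf : StrictMono f) (hc : Continuous f)
    (hbot : Tendsto f atBot atBot) {a : ℝ} (ha : 0 ≤ f a) : ∃! x, f x = 0 := by
  obtain ⟨b, hb⟩ := (hbot.eventually (eventually_le_atBot 0)).exists
  obtain ⟨x, hx⟩ := intermediate_value_univ b a hc ⟨hb, ha⟩
  exact ⟨x, hx, fun y hy => hf.injective (hy.trans hx.symm)⟩

theorem sq_div_le_of_le_deriv {Φ : ℝ → ℝ} {c θ s : ℝ} (hΦ : Differentiable ℝ Φ) (hΦ0 : Φ 0 = 0)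
    (hΦ' : ∀ s ∈ Icc 0 θ, (1 / c) * s ≤ (1 / 2) * deriv Φ s) (hs : s ∈ Icc 0 θ) :
    s ^ 2 / c ≤ Φ s := by
  have hder : ∀ s, HasDerivAt (fun s => Φ s - s ^ 2 / c) (deriv Φ s - 2 * s / c) s := fun s =>
    ((hΦ s).hasDerivAt.sub ((hasDerivAt_pow 2 s).div_const c)).congr_deriv (by norm_num)
  have hmono : MonotoneOn (fun s => Φ s - s ^ 2 / c) (Icc 0 θ) := by
    refine monotoneOn_of_hasDerivWithinAt_nonneg (convex_Icc 0 θ)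
      (fun s _ => (hder s).continuousAt.continuousWithinAt)
      (fun s _ => (hder s).hasDerivWithinAt) fun s hs => ?_
    rw [interior_Icc] at hs
    have := hΦ' s (Ioo_subset_Icc_self hs)
    rw [show 2 * s / c = 2 * ((1 / c) * s) by ring]
    linarith
  simpa [hΦ0] using hmono ⟨le_rfl, hs.1.trans hs.2⟩ hs hs.1

theorem add_sqrt_mul_div_sqrt_le {a b c y : ℝ} (hc : 0 < c) (hy : 0 ≤ y)
    (h : b ^ 2 + a ^ 2 / c ≤ y ^ 2) : (a + √c * b) / √(2 * c) ≤ y := by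
  have hsc : √c ^ 2 = c := sq_sqrt hc.le
  rw [div_le_iff₀ (by positivity)]
  refine le_of_sq_le_sq ?_ (by positivity)
  rw [mul_pow, sq_sqrt (by positivity)]
  calc (a + √c * b) ^ 2 ≤ 2 * (a ^ 2 + c * b ^ 2) := by
        nlinarith [sq_nonneg (a - √c * b)]
    _ = 2 * c * (b ^ 2 + a ^ 2 / c) := by field_simp; ring
    _ ≤ y ^ 2 * (2 * c) := by nlinarith

theorem sub_div_le_log_sub_log_of_div_le_deriv {f : ℝ → ℝ} {a b L : ℝ} (hab : a ≤ b)
    (hf : Differentiable ℝ f) (hpos : ∀ s ∈ Icc a b, 0 < f s)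
    (hder : ∀ s ∈ Icc a b, f s / L ≤ deriv f s) : (b - a) / L ≤ log (f b) - log (f a) := by
  have hg : ∀ s ∈ Icc a b,
      HasDerivAt (fun s => log (f s) - s / L) (deriv f s / f s - 1 / L) s := fun s hs =>
    ((hf s).hasDerivAt.log (hpos s hs).ne').sub ((hasDerivAt_id s).div_const L)
  have hmono : MonotoneOn (fun s => log (f s) - s / L) (Icc a b) := by
    refine monotoneOn_of_hasDerivWithinAt_nonneg (convex_Icc a b)
      (fun s hs => (hg s hs).continuousAt.continuousWithinAt)
      (fun s hs => (hg s (interior_subset hs)).hasDerivWithinAt) fun s hs => ?_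
    have hs := interior_subset hs
    rw [sub_nonneg, le_div_iff₀ (hpos s hs)]
    simpa [div_eq_inv_mul] using hder s hs
  have := hmono ⟨le_rfl, hab⟩ ⟨hab, le_rfl⟩ hab
  rw [sub_div]
  linarith

theorem log_add_sub_log_le_log_one_add_div {θ k t : ℝ} (hθ : 0 ≤ θ) (ht : 0 < t) (htk : t ≤ k) :
    log (θ + k) - log k ≤ log (1 + θ / t) := by
  have hk : 0 < k := ht.trans_le htk
  rw [← log_div (by positivity) hk.ne', add_div, div_self hk.ne', add_comm]
  exact log_le_log (by positivity) (by gcongr)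

theorem le_sqrt_mul_sqrt_two_mul_add_sq {c t : ℝ} (ht : 0 ≤ t) (hc : 1 ≤ c) :
    t ≤ √c * √(2 * t + t ^ 2) := by
  have : t ≤ √(2 * t + t ^ 2) := le_sqrt_of_sq_le (by nlinarith)
  nlinarith [one_le_sqrt.2 hc, sqrt_nonneg (2 * t + t ^ 2)]

theorem statement3_general
    (Φ : ℝ → ℝ) (θ₁ c₁ t : ℝ)
    (hθ₁ : 0 < θ₁) (hc₁ : 0 < c₁) (ht : 0 < t)
    (hΦreg : ContDiff ℝ 1 Φ)
    (hΦ0 : ∀ s ≤ (0:ℝ), Φ s = 0)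
    (hΦ' : ∀ s ∈ Icc (0:ℝ) θ₁,
        (1/c₁) * s ≤ (1/2) * deriv Φ s ∧ (1/2) * deriv Φ s ≤ c₁ * s)
    (u : ℝ → ℝ) (hu : ContDiff ℝ 2 u) (huconv : ConvexOn ℝ univ u)
    (hu0 : u 0 = θ₁)
    (hbot : Tendsto u atBot atBot)
    (hconsv : ∀ x, (deriv u x)^2 - Φ (u x) = (1 + t)^2 - 1) :
    Tendsto (deriv u) atBot (nhds (Real.sqrt (2*t + t^2))) ∧
    (∃! x : ℝ, u x = 0) ∧
    (∀ x : ℝ, u x = 0 → -Real.sqrt (2*c₁) * Real.log (1 + θ₁ / t) ≤ x) := by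
  have hud : Differentiable ℝ u := hu.differentiable (by norm_num)
  have hpos := huconv.deriv_pos_of_tendsto_atBot hud hbot
  have hmono : StrictMono u := strictMono_of_deriv_pos hpos
  have hE : (1 + t) ^ 2 - 1 = 2 * t + t ^ 2 := by ring
  refine ⟨hE ▸ tendsto_deriv_atBot_of_conservation hΦ0 hbot hpos hconsv,
    hmono.existsUnique_eq_zero hud.continuous hbot (hu0 ▸ hθ₁.le), fun x hx => ?_⟩
  set T := √(2 * t + t ^ 2)
  have hx0 : x < 0 := hmono.lt_iff_lt.1 (by rw [hx, hu0]; exact hθ₁)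
  have hc₁1 : 1 ≤ c₁ := by
    have h := hΦ' θ₁ ⟨hθ₁.le, le_rfl⟩
    have : 1 / c₁ ≤ c₁ := le_of_mul_le_mul_right (h.1.trans h.2) hθ₁
    rw [div_le_iff₀ hc₁] at this
    nlinarith
  have htk : t ≤ √c₁ * T := le_sqrt_mul_sqrt_two_mul_add_sq ht.le hc₁1
  have hder : ∀ s ∈ Icc x 0,
      (u s + √c₁ * T) / √(2 * c₁) ≤ deriv (fun s => u s + √c₁ * T) s := by
    intro s hs
    have hus : u s ∈ Icc 0 θ₁ := ⟨hx ▸ hmono.monotone hs.1, hu0 ▸ hmono.monotone hs.2⟩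
    have hΦu := sq_div_le_of_le_deriv (hΦreg.differentiable (by norm_num)) (hΦ0 0 le_rfl)
      (fun s hs => (hΦ' s hs).1) hus
    have hT2 : T ^ 2 = 2 * t + t ^ 2 := sq_sqrt (by positivity)
    rw [deriv_add_const]
    exact add_sqrt_mul_div_sqrt_le hc₁ (hpos s).le (by linarith [hconsv s])
  have hlog := sub_div_le_log_sub_log_of_div_le_deriv hx0.le (hud.add_const _)
    (fun s hs => by linarith [hx ▸ hmono.monotone hs.1]) hder
  rw [hx, hu0, zero_add, zero_sub] at hlog
  have hbound := hlog.trans (log_add_sub_log_le_log_one_add_div hθ₁.le ht htk)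
  rw [div_le_iff₀ (by positivity)] at hbound
  linarith

/-- the convex monotone 1D solution with slope 1+t at +∞ has slope
√(2t+t²) at −∞, and its unique root x_t satisfies x_t ≥ −√(2c₁) log(1+θ₁/t). -/
theorem statement3
    (Φ : ℝ → ℝ) (θ₁ θ₂ c₁ t : ℝ)
    (hθ₁ : 0 < θ₁) (hθ₁₂ : θ₁ < θ₂) (hc₁ : 0 < c₁) (ht : 0 < t)
    (hΦreg : ContDiff ℝ 1 Φ)
    (hΦ0 : ∀ s ≤ (0:ℝ), Φ s = 0)
    (hΦ1 : ∀ s, θ₂ ≤ s → Φ s = 1)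
    (hΦ' : ∀ s ∈ Icc (0:ℝ) θ₁,
        (1/c₁) * s ≤ (1/2) * deriv Φ s ∧ (1/2) * deriv Φ s ≤ c₁ * s)
    (u : ℝ → ℝ) (hu : ContDiff ℝ 2 u) (huconv : ConvexOn ℝ univ u)
    (hODE : ∀ x, deriv (deriv u) x = (1/2) * deriv Φ (u x))
    (hu0 : u 0 = θ₁)
    (hslope : Tendsto (deriv u) atTop (nhds (1 + t)))
    (hbot : Tendsto u atBot atBot)
    (hconsv : ∀ x, (deriv u x)^2 - Φ (u x) = (1 + t)^2 - 1) :
    Tendsto (deriv u) atBot (nhds (Real.sqrt (2*t + t^2))) ∧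
    (∃! x : ℝ, u x = 0) ∧
    (∀ x : ℝ, u x = 0 → -Real.sqrt (2*c₁) * Real.log (1 + θ₁ / t) ≤ x) :=
  statement3_general Φ θ₁ c₁ t hθ₁ hc₁ ht hΦreg hΦ0 hΦ' u hu huconv hu0 hbot hconsv
end

section
/- Under the hypotheses of the previous statement (even-type 1D solution with slopes ±(1−|τ|) at ±∞ and minimum point y_τ, normalized so u(0) = θ₁), the minimum point satisfies y_τ ≥ −√(2c₁)·(2 + log(θ₁/√(2|τ|/c₁))). -/
/-!
On `[yτ, 0]` the solution takes values in `[m, θ₁]` with `m = u(yτ)`, so the lower bound on `Φ'`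
gives `u'' ≥ u / c₁` there; since `u'(yτ) = 0`, comparison with the solution of `v'' = v / c₁`
yields `θ₁ = u(0) ≥ m cosh(yτ / √c₁) ≥ (m / 2) e^{-yτ/√c₁}`. The upper bound on `Φ'` gives
`Φ(m) ≤ c₁ m²`, and `Φ(m) = 2|τ| - τ² ≥ |τ|` bounds `m` below by `√(2|τ|/c₁) / 2`. Taking
logarithms gives the estimate.
-/

open Real Set Filter

lemma monotoneOn_Icc_of_hasDerivWithinAt_nonneg {f f' : ℝ → ℝ} {a b : ℝ}
    (hf : ∀ x ∈ Icc a b, HasDerivWithinAt f (f' x) (Icc a b) x)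
    (hf'₀ : ∀ x ∈ Ioo a b, 0 ≤ f' x) : MonotoneOn f (Icc a b) :=
  monotoneOn_of_hasDerivWithinAt_nonneg (convex_Icc a b)
    (fun x hx => (hf x hx).continuousWithinAt)
    (by
      rw [interior_Icc]
      exact fun x hx => (hf x (Ioo_subset_Icc_self hx)).mono Ioo_subset_Icc_self)
    (by rwa [interior_Icc])

lemma hasDerivAt_exp_mul_sub (c a x : ℝ) :
    HasDerivAt (fun x => exp (c * (x - a))) (exp (c * (x - a)) * c) x := by
  simpa using (((hasDerivAt_id x).sub_const a).const_mul c).exp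

theorem mul_cosh_le_of_sq_mul_le_deriv_deriv {f f' f'' : ℝ → ℝ} {k a b : ℝ}
    (hf : ∀ x ∈ Icc a b, HasDerivWithinAt f (f' x) (Icc a b) x)
    (hf' : ∀ x ∈ Icc a b, HasDerivWithinAt f' (f'' x) (Icc a b) x)
    (hf'a : f' a = 0) (h : ∀ x ∈ Ioo a b, k ^ 2 * f x ≤ f'' x) :
    ∀ x ∈ Icc a b, f a * cosh (k * (x - a)) ≤ f x := by
  intro x hx
  have ha : a ∈ Icc a b := left_mem_Icc.2 (hx.1.trans hx.2)
  have hw : ∀ x ∈ Icc a b, k * f a * exp (k * (x - a)) ≤ f' x + k * f x := by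
    -- `(f' + k f) e^{-k(x-a)}` has derivative `(f'' - k² f) e^{-k(x-a)} ≥ 0`
    have hmono : MonotoneOn (fun x => (f' x + k * f x) * exp (-k * (x - a))) (Icc a b) := by
      refine monotoneOn_Icc_of_hasDerivWithinAt_nonneg (fun x hx =>
        ((hf' x hx).add ((hf x hx).const_mul k)).mul
          (hasDerivAt_exp_mul_sub (-k) a x).hasDerivWithinAt) fun x hx => ?_
      simp only [Pi.add_apply]
      nlinarith [mul_nonneg (sub_nonneg.2 (h x hx)) (exp_pos (-k * (x - a))).le]
    intro x hx
    have := hmono ha hx hx.1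
    simp only [hf'a, sub_self, mul_zero, exp_zero] at this
    calc k * f a * exp (k * (x - a))
        ≤ (f' x + k * f x) * exp (-k * (x - a)) * exp (k * (x - a)) := by
          gcongr ?_ * _; linarith
      _ = f' x + k * f x := by
          rw [mul_assoc, ← exp_add, neg_mul, neg_add_cancel, exp_zero, mul_one]
  have hexp_two : ∀ x, exp (2 * k * (x - a)) = exp (k * (x - a)) * exp (k * (x - a)) := by
    intro x; rw [← exp_add]; ring_nf
  -- its derivative is `e^{k(x-a)} (f' + k f - k f(a) e^{k(x-a)}) ≥ 0` by `hw`
  have hmono : MonotoneOn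
      (fun x => f x * exp (k * (x - a)) - f a * (exp (2 * k * (x - a)) + 1) / 2) (Icc a b) := by
    refine monotoneOn_Icc_of_hasDerivWithinAt_nonneg (fun x hx =>
      (((hf x hx).mul (hasDerivAt_exp_mul_sub k a x).hasDerivWithinAt).sub
        ((((hasDerivAt_exp_mul_sub (2 * k) a x).add_const 1).const_mul (f a)).div_const 2
          ).hasDerivWithinAt)) fun x hx => ?_
    have := hw x (Ioo_subset_Icc_self hx)
    rw [hexp_two]
    nlinarith [exp_pos (k * (x - a))]
  have := hmono ha hx hx.1
  simp only [sub_self, mul_zero, exp_zero] at this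
  rw [hexp_two] at this
  rw [cosh_eq, exp_neg]
  set E := exp (k * (x - a))
  have hE : 0 < E := exp_pos _
  calc f a * ((E + E⁻¹) / 2) = f a * (E * E + 1) / 2 / E := by field_simp
    _ ≤ f x * E / E := by gcongr; linarith
    _ = f x := by field_simp

lemma le_mul_sq_of_deriv_le_s5 {Φ Φ' : ℝ → ℝ} {c t : ℝ}
    (hΦ : ∀ s ∈ Icc 0 t, HasDerivWithinAt Φ (Φ' s) (Icc 0 t) s) (hΦ0 : Φ 0 = 0)
    (hΦ' : ∀ s ∈ Ioo 0 t, Φ' s ≤ 2 * c * s) (ht : 0 ≤ t) : Φ t ≤ c * t ^ 2 := by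
  have hmono : MonotoneOn (fun s => c * s ^ 2 - Φ s) (Icc 0 t) :=
    monotoneOn_Icc_of_hasDerivWithinAt_nonneg
      (fun s hs => (((hasDerivAt_pow 2 s).const_mul c).hasDerivWithinAt).sub (hΦ s hs))
      fun s hs => by norm_num; linarith [hΦ' s hs]
  have := hmono (left_mem_Icc.2 ht) (right_mem_Icc.2 ht) ht
  simp only [hΦ0] at this
  linarith

lemma neg_sqrt_two_mul_le_of_mul_cosh_le {c m σ θ y : ℝ} (hc : 0 < c) (hσ : 0 < σ)
    (hσm : σ ≤ 2 * m) (hy : y ≤ 0) (hcosh : m * cosh (-y / √c) ≤ θ) :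
    -√(2 * c) * (2 + log (θ / σ)) ≤ y := by
  have hm : 0 < m := by linarith
  have hθ : 0 < θ := (mul_pos hm (cosh_pos _)).trans_le hcosh
  have hexp : exp (-y / √c) ≤ exp (2 + log (θ / σ)) := by
    have he : (4 : ℝ) ≤ exp 2 := by
      rw [show (2 : ℝ) = 1 + 1 by norm_num, exp_add]
      nlinarith [add_one_le_exp (1 : ℝ)]
    calc exp (-y / √c) ≤ 2 * cosh (-y / √c) := by
          rw [cosh_eq]; linarith [exp_pos (-(-y / √c))]
      _ ≤ 2 * θ / m := by rw [le_div_iff₀ hm]; linarith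
      _ ≤ 4 * θ / σ := by rw [div_le_div_iff₀ hm hσ]; nlinarith
      _ ≤ exp 2 * (θ / σ) := by rw [← mul_div_assoc]; gcongr
      _ = exp (2 + log (θ / σ)) := by rw [exp_add, exp_log (div_pos hθ hσ)]
  have hdist : -y / √c ≤ 2 + log (θ / σ) := exp_le_exp.1 hexp
  have hL : 0 ≤ 2 + log (θ / σ) := (div_nonneg (by linarith) (sqrt_nonneg _)).trans hdist
  calc -√(2 * c) * (2 + log (θ / σ)) ≤ -(√c * (2 + log (θ / σ))) := by
        rw [neg_mul, neg_le_neg_iff]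
        exact mul_le_mul_of_nonneg_right (sqrt_le_sqrt (by linarith)) hL
    _ ≤ -(√c * (-y / √c)) := neg_le_neg (mul_le_mul_of_nonneg_left hdist (sqrt_nonneg _))
    _ = y := by field_simp [(sqrt_pos.2 hc).ne']

theorem statement5_general
    (Φ : ℝ → ℝ) (θ₁ c₁ τ : ℝ) (yτ : ℝ)
    (hc₁ : 0 < c₁) (hτ : τ ∈ Ioo (-1 : ℝ) 0)
    (hΦreg : ContDiff ℝ 1 Φ)
    (hΦ0 : ∀ s ≤ (0:ℝ), Φ s = 0)
    (hΦ' : ∀ s ∈ Icc (0:ℝ) θ₁,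
        (1/c₁) * s ≤ (1/2) * deriv Φ s ∧ (1/2) * deriv Φ s ≤ c₁ * s)
    (u : ℝ → ℝ) (hu : ContDiff ℝ 2 u)
    (hODE : ∀ x, deriv (deriv u) x = (1/2) * deriv Φ (u x))
    (hmin : ∀ x, u yτ ≤ u x)
    (hminval : Φ (u yτ) = 2*|τ| - τ^2)
    (hu0 : u 0 = θ₁)
    (hyτ : yτ ≤ 0)
    (hmono : MonotoneOn u (Icc yτ 0)) :
    -Real.sqrt (2*c₁) * (2 + Real.log (θ₁ / Real.sqrt (2*|τ|/c₁))) ≤ yτ := by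
  set m := u yτ
  have hτ_pos : 0 < |τ| := abs_pos.2 hτ.2.ne
  have hτ_lt : |τ| < 1 := abs_lt.2 ⟨hτ.1, hτ.2.trans one_pos⟩
  have hm_pos : 0 < m := by
    by_contra! hm
    nlinarith [hminval ▸ hΦ0 m hm, sq_abs τ]
  have hmθ : m ≤ θ₁ := hu0 ▸ hmin 0
  have hΦm : Φ m ≤ c₁ * m ^ 2 :=
    le_mul_sq_of_deriv_le_s5
      (fun s _ => ((hΦreg.differentiable one_ne_zero s).hasDerivAt).hasDerivWithinAt)
      (hΦ0 0 le_rfl)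
      (fun s hs => by linarith [(hΦ' s ⟨hs.1.le, hs.2.le.trans hmθ⟩).2]) hm_pos.le
  have hσm : √(2 * |τ| / c₁) ≤ 2 * m := by
    rw [sqrt_le_left (by positivity), div_le_iff₀ hc₁]
    nlinarith [sq_abs τ]
  have hcosh : m * cosh ((√c₁)⁻¹ * (0 - yτ)) ≤ θ₁ := by
    refine hu0 ▸ mul_cosh_le_of_sq_mul_le_deriv_deriv
      (fun x _ => (hu.differentiable (by norm_num) x).hasDerivAt.hasDerivWithinAt)
      (fun x _ => (hu.differentiable_deriv_two x).hasDerivAt.hasDerivWithinAt)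
      (IsLocalMin.deriv_eq_zero (Eventually.of_forall hmin))
      (fun x hx => ?_) 0 (right_mem_Icc.2 hyτ)
    have hux : u x ≤ θ₁ := hu0 ▸ hmono (Ioo_subset_Icc_self hx) (right_mem_Icc.2 hyτ) hx.2.le
    rw [hODE, inv_pow, sq_sqrt hc₁.le, ← one_div]
    exact (hΦ' (u x) ⟨hm_pos.le.trans (hmin x), hux⟩).1
  rw [show (√c₁)⁻¹ * (0 - yτ) = -yτ / √c₁ by ring] at hcosh
  exact neg_sqrt_two_mul_le_of_mul_cosh_le hc₁ (sqrt_pos.2 (by positivity)) hσm hyτ hcosh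

/-- lower bound on the minimum point y_τ of the even-type 1D solution:
y_τ ≥ −√(2c₁)·(2 + log(θ₁/√(2|τ|/c₁))). -/
theorem statement5
    (Φ : ℝ → ℝ) (θ₁ c₁ τ : ℝ) (yτ : ℝ)
    (hθ₁ : 0 < θ₁) (hc₁ : 0 < c₁) (hτ : τ ∈ Ioo (-1 : ℝ) 0)
    (hΦreg : ContDiff ℝ 1 Φ)
    (hΦ0 : ∀ s ≤ (0:ℝ), Φ s = 0)
    (hΦ' : ∀ s ∈ Icc (0:ℝ) θ₁,
        (1/c₁) * s ≤ (1/2) * deriv Φ s ∧ (1/2) * deriv Φ s ≤ c₁ * s)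
    (u : ℝ → ℝ) (hu : ContDiff ℝ 2 u)
    (hODE : ∀ x, deriv (deriv u) x = (1/2) * deriv Φ (u x))
    (hconsv : ∀ x, (deriv u x)^2 = Φ (u x) - 2*|τ| + τ^2)
    (hmin : ∀ x, u yτ ≤ u x)
    (hminval : Φ (u yτ) = 2*|τ| - τ^2)
    (hu0 : u 0 = θ₁)
    (hyτ : yτ ≤ 0)
    (hmono : MonotoneOn u (Icc yτ 0)) :
    -Real.sqrt (2*c₁) * (2 + Real.log (θ₁ / Real.sqrt (2*|τ|/c₁))) ≤ yτ :=
  statement5_general Φ θ₁ c₁ τ yτ hc₁ hτ hΦreg hΦ0 hΦ' u hu hODE hmin hminval hu0 hyτ hmono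
end

section
/- For the truncated subsolution w^ε (equal to 0 for x ≤ x_ε and equal to the increasing 1D solution v^ε with slope 1+ε at +∞ for x > x_ε, normalized so w^ε(0) = θ₁·ε), there exists c > 1 depending only on θ₁, θ₂, c₁ such that the diameter of the set {x : θ₁ε ≤ w^ε(x) ≤ θ₂ε} is at most c·ε, for every ε > 0. -/
open Real Set Filter

/-!
On the fat level set `w^ε = v^ε ∈ [θ₁ε, θ₂ε]`, and there the conservation law together with the
monotonicity of `Φ` gives `(v')² ≥ Φ(θ₁) ≥ θ₁² / c₁`, i.e. `v' ≥ θ₁ / √c₁`. A function whose slope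
is at least `m > 0` crosses a window of height `(θ₂ - θ₁)ε` over an interval of length at most
`(θ₂ - θ₁)ε / m`.
-/

theorem diam_le_of_le_deriv {f : ℝ → ℝ} {s : Set ℝ} {m a b : ℝ} (hf : Differentiable ℝ f)
    (hfmono : Monotone f) (hm : 0 < m) (hab : a ≤ b)
    (hderiv : ∀ x, a ≤ f x → m ≤ deriv f x) (hs : s ⊆ f ⁻¹' Icc a b) :
    Metric.diam s ≤ (b - a) / m := by
  have hlen : ∀ p ∈ s, ∀ q ∈ s, p ≤ q → q - p ≤ (b - a) / m := by
    intro p hp q hq hpq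
    have hslope : ∀ x ∈ interior (Icc p q), m ≤ deriv f x := by
      rw [interior_Icc]
      exact fun x hx ↦ hderiv x ((hs hp).1.trans (hfmono hx.1.le))
    have hmvt := (convex_Icc p q).mul_sub_le_image_sub_of_le_deriv hf.continuous.continuousOn
      hf.differentiableOn hslope p (left_mem_Icc.2 hpq) q (right_mem_Icc.2 hpq) hpq
    rw [le_div_iff₀ hm]
    linarith [(hs hp).1, (hs hq).2]
  refine Metric.diam_le_of_forall_dist_le (div_nonneg (sub_nonneg.2 hab) hm.le) fun p hp q hq ↦ ?_
  rw [Real.dist_eq, abs_sub_le_iff]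
  rcases le_total p q with hpq | hqp
  · exact ⟨by linarith [div_nonneg (sub_nonneg.2 hab) hm.le], hlen p hp q hq hpq⟩
  · exact ⟨hlen q hq p hp hqp, by linarith [div_nonneg (sub_nonneg.2 hab) hm.le]⟩

theorem le_deriv_of_conservation_law {Φ v : ℝ → ℝ} {ε θ m x : ℝ} (hε : 0 < ε) (hθ : 0 < θ)
    (hΦ : Monotone Φ) (hm : 0 ≤ m) (hmΦ : m ^ 2 ≤ Φ θ) (hv : Monotone v)
    (hlaw : ∀ x, 0 < v x → deriv v x ^ 2 = Φ (v x / ε) + 2 * ε + ε ^ 2) (hx : θ * ε ≤ v x) :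
    m ≤ deriv v x := by
  have hθx : θ ≤ v x / ε := (le_div_iff₀ hε).2 hx
  have hsq : m ^ 2 ≤ deriv v x ^ 2 := by
    rw [hlaw x ((mul_pos hθ hε).trans_le hx)]
    nlinarith [hΦ hθx]
  exact (pow_le_pow_iff_left₀ hm hv.deriv_nonneg two_ne_zero).1 hsq

theorem statement7_general
    (Φ : ℝ → ℝ) (θ₁ θ₂ c₁ : ℝ)
    (hθ₁ : 0 < θ₁) (hθ₁₂ : θ₁ < θ₂) (hc₁ : 0 < c₁)
    (hΦmono : Monotone Φ)
    (hΦθ₁ : θ₁^2 / c₁ ≤ Φ θ₁) :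
    ∃ c : ℝ, 1 < c ∧
      ∀ ε : ℝ, 0 < ε →
      ∀ v : ℝ → ℝ, ContDiff ℝ 1 v → StrictMono v →
        v 0 = θ₁ * ε →
        (∀ x, 0 < v x → (deriv v x)^2 = Φ (v x / ε) + 2*ε + ε^2) →
      ∀ xε : ℝ, v xε = 0 →
      ∀ w : ℝ → ℝ, (∀ x, w x = if x ≤ xε then 0 else v x) →
        Metric.diam {x : ℝ | θ₁ * ε ≤ w x ∧ w x ≤ θ₂ * ε} ≤ c * ε := by
  set m := θ₁ / √c₁
  have hm : 0 < m := div_pos hθ₁ (sqrt_pos.2 hc₁)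
  have hm2 : m ^ 2 = θ₁ ^ 2 / c₁ := by rw [div_pow, sq_sqrt hc₁.le]
  refine ⟨(θ₂ - θ₁) / m + 1, by linarith [div_pos (sub_pos.2 hθ₁₂) hm], ?_⟩
  intro ε hε v hv hvmono _ hlaw xε _ w hw
  have hsub : {x | θ₁ * ε ≤ w x ∧ w x ≤ θ₂ * ε} ⊆ v ⁻¹' Icc (θ₁ * ε) (θ₂ * ε) := by
    rintro x ⟨hx₁, hx₂⟩
    have hxε : ¬ x ≤ xε := fun h ↦ by
      rw [hw, if_pos h] at hx₁
      linarith [mul_pos hθ₁ hε]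
    rw [hw, if_neg hxε] at hx₁ hx₂
    exact ⟨hx₁, hx₂⟩
  calc Metric.diam {x | θ₁ * ε ≤ w x ∧ w x ≤ θ₂ * ε}
      ≤ (θ₂ * ε - θ₁ * ε) / m :=
        diam_le_of_le_deriv (hv.differentiable one_ne_zero) hvmono.monotone hm
          (by nlinarith) (fun x ↦ le_deriv_of_conservation_law hε hθ₁ hΦmono hm.le
            (hm2.trans_le hΦθ₁) hvmono.monotone hlaw) hsub
    _ ≤ ((θ₂ - θ₁) / m + 1) * ε := by
        rw [← sub_mul, mul_div_right_comm, add_mul]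
        linarith

/-- diameter bound for the "fat level set" {θ₁ε ≤ w^ε ≤ θ₂ε} of the
truncated 1D subsolution w^ε, uniformly in ε > 0, with a constant c > 1 depending
only on θ₁, θ₂, c₁. -/
theorem statement7
    (Φ : ℝ → ℝ) (θ₁ θ₂ c₁ : ℝ)
    (hθ₁ : 0 < θ₁) (hθ₁₂ : θ₁ < θ₂) (hc₁ : 0 < c₁)
    (hΦmono : Monotone Φ) (hΦnonneg : ∀ s, 0 ≤ Φ s)
    (hΦθ₁ : θ₁^2 / c₁ ≤ Φ θ₁) :
    ∃ c : ℝ, 1 < c ∧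
      ∀ ε : ℝ, 0 < ε →
      ∀ v : ℝ → ℝ, ContDiff ℝ 1 v → StrictMono v →
        v 0 = θ₁ * ε →
        (∀ x, 0 < v x → (deriv v x)^2 = Φ (v x / ε) + 2*ε + ε^2) →
      ∀ xε : ℝ, v xε = 0 →
      ∀ w : ℝ → ℝ, (∀ x, w x = if x ≤ xε then 0 else v x) →
        Metric.diam {x : ℝ | θ₁ * ε ≤ w x ∧ w x ≤ θ₂ * ε} ≤ c * ε :=
  statement7_general Φ θ₁ θ₂ c₁ hθ₁ hθ₁₂ hc₁ hΦmono hΦθ₁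
end

section
/- For the truncated supersolution w^{−ε} (equal to its minimum value for x ≤ y_ε and equal to the 1D solution v^{−ε} with slope 1−ε at +∞ for x > y_ε, normalized so w^{−ε}(0) = θ₁ε), if ε ∈ (0, θ₁²/(8c₁)) then diam({x : θ₁ε ≤ w^{−ε}(x) ≤ θ₂ε}) ≤ c·ε, where c depends only on θ₁, θ₂, c₁. -/
/-!
Wherever `v ≥ θ₁ε` the conservation law gives `(v')² ≥ θ₁²/(4c₁)`, so `v` has no critical
points there; in particular `v(y_ε) < θ₁ε`, since `v'(y_ε) = 0`. A C¹ function without critical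
points above a level, which crosses that level upwards, can never turn back: to the right of
`y_ε` the set `{v ≥ θ₁ε}` is a half-line on which `v' ≥ θ₁/(2√c₁)`. Hence the level set
`{θ₁ε ≤ w ≤ θ₂ε}` has length at most `2√c₁ (θ₂ - θ₁) ε / θ₁`.
-/

open Real Set Filter
open Topology

theorem le_and_deriv_pos_of_mem_Icc {f : ℝ → ℝ} {L a b : ℝ} (hf : ContDiff ℝ 1 f)
    (hcrit : ∀ t, L ≤ f t → deriv f t ≠ 0) (ha : L ≤ f a) (ha' : 0 < deriv f a) :
    ∀ t ∈ Icc a b, L ≤ f t ∧ 0 < deriv f t := by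
  have hd : Differentiable ℝ f := hf.differentiable one_ne_zero
  have hd' : Continuous (deriv f) := hf.continuous_deriv le_rfl
  set s := {t | L ≤ f t ∧ 0 ≤ deriv f t}
  have hs : IsClosed s :=
    (isClosed_le continuous_const hd.continuous).inter (isClosed_le continuous_const hd')
  have hpos : ∀ t ∈ s, 0 < deriv f t := fun t ht => ht.2.lt_of_ne' (hcrit t ht.1)
  have hsub : Icc a b ⊆ s := by
    refine (hs.inter isClosed_Icc).Icc_subset_of_forall_mem_nhdsWithin ⟨ha, ha'.le⟩ ?_
    rintro t ⟨ht, -⟩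
    have hslope : ∀ᶠ u in 𝓝[>] t, 0 < slope f t u :=
      ((hasDerivWithinAt_iff_tendsto_slope' self_notMem_Ioi).1
        (hd t).hasDerivAt.hasDerivWithinAt).eventually (eventually_gt_nhds (hpos t ht))
    have hderiv : ∀ᶠ u in 𝓝[>] t, 0 < deriv f u :=
      nhdsWithin_le_nhds (hd'.continuousAt.eventually (eventually_gt_nhds (hpos t ht)))
    filter_upwards [hslope, hderiv, self_mem_nhdsWithin] with u hu hu' htu
    exact ⟨ht.1.trans ((slope_pos_iff htu).1 hu).le, hu'.le⟩
  exact fun t ht => ⟨(hsub ht).1, hpos t (hsub ht)⟩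

/-- Reflecting `t ↦ -t` turns a descent through the level `L` at `x` into an ascent, which
`le_and_deriv_pos_of_mem_Icc` propagates down to `y`. -/
theorem deriv_pos_of_lt_of_le {f : ℝ → ℝ} {L y x : ℝ} (hf : ContDiff ℝ 1 f)
    (hcrit : ∀ t, L ≤ f t → deriv f t ≠ 0) (hyx : y ≤ x) (hy : f y < L) (hx : L ≤ f x) :
    0 < deriv f x := by
  by_contra! hneg
  have hrefl := le_and_deriv_pos_of_mem_Icc (f := fun t => f (-t)) (b := -y)
    (hf.comp contDiff_neg) (fun t ht => by simpa [deriv_comp_neg] using hcrit _ ht)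
    (by simpa using hx) (by simpa [deriv_comp_neg] using hneg.lt_of_ne (hcrit x hx))
    (-y) ⟨neg_le_neg hyx, le_rfl⟩
  simp only [neg_neg] at hrefl
  exact hrefl.1.not_gt hy

theorem sqrt_mul_sub_le_sub_of_sq_le_deriv_sq {f : ℝ → ℝ} {L q y a b : ℝ}
    (hf : ContDiff ℝ 1 f) (hq : 0 < q) (hsq : ∀ t, L ≤ f t → q ≤ deriv f t ^ 2)
    (hy : f y < L) (hya : y ≤ a) (ha : L ≤ f a) (hab : a ≤ b) :
    √q * (b - a) ≤ f b - f a := by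
  have hcrit : ∀ t, L ≤ f t → deriv f t ≠ 0 := fun t ht h0 => by
    have := hsq t ht
    rw [h0] at this
    linarith
  have hinc := le_and_deriv_pos_of_mem_Icc (b := b) hf hcrit ha (deriv_pos_of_lt_of_le hf hcrit hya hy ha)
  have hslope : ∀ t ∈ interior (Icc a b), √q ≤ deriv f t := by
    intro t ht
    obtain ⟨hLt, hpos⟩ := hinc t (interior_subset ht)
    simpa [Real.sqrt_sq hpos.le] using Real.sqrt_le_sqrt (hsq t hLt)
  have hd : Differentiable ℝ f := hf.differentiable one_ne_zero
  exact (convex_Icc a b).mul_sub_le_image_sub_of_le_deriv hd.continuous.continuousOn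
    hd.differentiableOn hslope a ⟨le_rfl, hab⟩ b ⟨hab, le_rfl⟩ hab

theorem Real.diam_le_of_forall_sub_le {s : Set ℝ} {C : ℝ} (hC : 0 ≤ C)
    (h : ∀ x ∈ s, ∀ y ∈ s, x ≤ y → y - x ≤ C) : Metric.diam s ≤ C := by
  refine Metric.diam_le_of_forall_dist_le hC fun x hx y hy => ?_
  rcases le_total x y with hxy | hyx
  · rw [dist_comm, Real.dist_eq, abs_of_nonneg (sub_nonneg.2 hxy)]
    exact h x hx y hy hxy
  · rw [Real.dist_eq, abs_of_nonneg (sub_nonneg.2 hyx)]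
    exact h y hy x hx hyx

theorem sq_le_deriv_sq_of_le {Φ v : ℝ → ℝ} {θ₁ c₁ ε x : ℝ} (hΦmono : Monotone Φ)
    (hΦθ₁ : θ₁ ^ 2 / (2 * c₁) ≤ Φ θ₁) (hε : 0 < ε) (hε' : ε < θ₁ ^ 2 / (8 * c₁))
    (hode : ∀ x, deriv v x ^ 2 = Φ (v x / ε) - 2 * ε + ε ^ 2) (hx : θ₁ * ε ≤ v x) :
    θ₁ ^ 2 / (4 * c₁) ≤ deriv v x ^ 2 := by
  have hΦ : Φ θ₁ ≤ Φ (v x / ε) := hΦmono ((le_div_iff₀ hε).2 hx)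
  have h2 : θ₁ ^ 2 / (2 * c₁) = 4 * (θ₁ ^ 2 / (8 * c₁)) := by ring
  have h4 : θ₁ ^ 2 / (4 * c₁) = 2 * (θ₁ ^ 2 / (8 * c₁)) := by ring
  nlinarith [hode x]

theorem statement8_general
    (Φ : ℝ → ℝ) (θ₁ θ₂ c₁ : ℝ)
    (hθ₁ : 0 < θ₁) (hθ₁₂ : θ₁ < θ₂) (hc₁ : 0 < c₁)
    (hΦmono : Monotone Φ)
    (hΦlow : ∀ s ∈ Icc (0:ℝ) θ₁, s^2 / (2 * c₁) ≤ Φ s) :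
    ∃ c : ℝ, 1 < c ∧
      ∀ ε : ℝ, 0 < ε → ε < θ₁^2 / (8 * c₁) →
      ∀ v : ℝ → ℝ, ContDiff ℝ 1 v →
        v 0 = θ₁ * ε →
        (∀ x, (deriv v x)^2 = Φ (v x / ε) - 2*ε + ε^2) →
      ∀ yε : ℝ, (∀ x, v yε ≤ v x) →
      ∀ w : ℝ → ℝ, (∀ x, w x = if x ≤ yε then v yε else v x) →
        Metric.diam {x : ℝ | θ₁ * ε ≤ w x ∧ w x ≤ θ₂ * ε} ≤ c * ε := by
  set q := θ₁ ^ 2 / (4 * c₁)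
  have hq : 0 < q := by positivity
  have hm : 0 < (θ₂ - θ₁) / √q := div_pos (sub_pos.2 hθ₁₂) (Real.sqrt_pos.2 hq)
  refine ⟨(θ₂ - θ₁) / √q + 1, by linarith, ?_⟩
  intro ε hε hε' v hv _ hode yε hmin w hw
  have hsq : ∀ t, θ₁ * ε ≤ v t → q ≤ deriv v t ^ 2 := fun t =>
    sq_le_deriv_sq_of_le hΦmono (hΦlow θ₁ ⟨hθ₁.le, le_rfl⟩) hε hε' hode
  have hvy : v yε < θ₁ * ε := by
    by_contra! h
    have := hsq yε h
    rw [(IsLocalMin.deriv_eq_zero (.of_forall hmin))] at this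
    linarith
  have hlevel : ∀ x, θ₁ * ε ≤ w x → w x ≤ θ₂ * ε → yε ≤ x ∧ θ₁ * ε ≤ v x ∧ v x ≤ θ₂ * ε := by
    intro x h₁ h₂
    rw [hw] at h₁ h₂
    split_ifs at h₁ h₂ with hx
    · linarith
    · exact ⟨(not_le.1 hx).le, h₁, h₂⟩
  refine Real.diam_le_of_forall_sub_le (by positivity) ?_
  rintro a ⟨ha₁, ha₂⟩ b ⟨hb₁, hb₂⟩ hab
  obtain ⟨hya, hva, -⟩ := hlevel a ha₁ ha₂
  obtain ⟨-, -, hvb⟩ := hlevel b hb₁ hb₂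
  have hgrowth := sqrt_mul_sub_le_sub_of_sq_le_deriv_sq hv hq hsq hvy hya hva hab
  have hba : b - a ≤ (θ₂ - θ₁) / √q * ε := by
    rw [div_mul_eq_mul_div, le_div_iff₀ (Real.sqrt_pos.2 hq)]
    linarith
  linarith

/-- diameter bound for {θ₁ε ≤ w^{−ε} ≤ θ₂ε} for the truncated 1D
supersolution w^{−ε}, for ε ∈ (0, θ₁²/(8c₁)), with c depending only on θ₁, θ₂, c₁. -/
theorem statement8
    (Φ : ℝ → ℝ) (θ₁ θ₂ c₁ : ℝ)
    (hθ₁ : 0 < θ₁) (hθ₁₂ : θ₁ < θ₂) (hc₁ : 0 < c₁)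
    (hΦmono : Monotone Φ) (hΦnonneg : ∀ s, 0 ≤ Φ s)
    (hΦlow : ∀ s ∈ Icc (0:ℝ) θ₁, s^2 / (2 * c₁) ≤ Φ s) :
    ∃ c : ℝ, 1 < c ∧
      ∀ ε : ℝ, 0 < ε → ε < θ₁^2 / (8 * c₁) →
      ∀ v : ℝ → ℝ, ContDiff ℝ 1 v →
        v 0 = θ₁ * ε →
        (∀ x, (deriv v x)^2 = Φ (v x / ε) - 2*ε + ε^2) →
      ∀ yε : ℝ, (∀ x, v yε ≤ v x) →
      ∀ w : ℝ → ℝ, (∀ x, w x = if x ≤ yε then v yε else v x) →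
        Metric.diam {x : ℝ | θ₁ * ε ≤ w x ∧ w x ≤ θ₂ * ε} ≤ c * ε :=
  statement8_general Φ θ₁ θ₂ c₁ hθ₁ hθ₁₂ hc₁ hΦmono hΦlow
end

section
/- There exists ε₀ ∈ (0,1) depending only on N and c₁ such that for every ε ∈ (0,ε₀), every solution u of Δu = (1/2)Φ'_ε(u), every point x₀ with u(x₀) ≤ θ₁ε, and every ball B_{ε^{3/4}}(x₀) ⊂ {u ≤ θ₁ε}, one has u ≤ 3θ₁ε·exp(−ε^{−1/4}/(4√c₁)) in B_{ε^{3/4}/2}(x₀). -/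
open Real Set Filter Metric MeasureTheory

/-- Coordinate Laplacian on Euclidean space. -/
noncomputable def lap {N : ℕ} (u : EuclideanSpace ℝ (Fin N) → ℝ)
    (x : EuclideanSpace ℝ (Fin N)) : ℝ :=
  ∑ i : Fin N,
    fderiv ℝ (fun y => fderiv ℝ u y (EuclideanSpace.single i 1)) x (EuclideanSpace.single i 1)

/-!
Write `ε = t⁴`, so the ball has radius `R = t³` and `ε^(-1/4) = 1/t`. Since `u ≤ θ₁ε` on the ball,
the lower bound on `Φ'` gives `Δu ≥ u / (c₁ε²)` there. The radial barrier
`w x = θ₁ε · exp (κ (|x - x₀|² - R²))` with `κ R² = 1 / (3√c₁ t)` satisfies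
`Δw = (2Nκ + 4κ²|x - x₀|²) w ≤ w / (c₁ε²)` once `6N√c₁ t ≤ 5`, and `w = θ₁ε ≥ u` on the sphere.
At a positive maximum of `u - w` in the ball we would have `Δ(u - w) > 0`, so `u ≤ w`, and on the
half ball `w ≤ θ₁ε · exp (-3κR²/4) = θ₁ε · exp (-ε^(-1/4) / (4√c₁))`.
-/

open Topology

theorem deriv_deriv_nonpos_of_isLocalMax {f : ℝ → ℝ} {a : ℝ} (hf : IsLocalMax f a)
    (hc : ContinuousAt f a) : deriv (deriv f) a ≤ 0 := by
  by_contra! hpos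
  have hmin : IsLocalMin f a := isLocalMin_of_deriv_deriv_pos hpos hf.deriv_eq_zero hc
  have hconst : f =ᶠ[𝓝 a] fun _ => f a :=
    (hmin.and hf).mono fun x hx => le_antisymm hx.2 hx.1
  have hderiv : deriv f =ᶠ[𝓝 a] fun _ => 0 := by
    filter_upwards [hconst.deriv] with x hx
    simp [hx]
  simp [hderiv.deriv_eq] at hpos

section LineRestriction

variable {E : Type*} [NormedAddCommGroup E] [NormedSpace ℝ E]

theorem deriv_deriv_comp_line {v : E → ℝ} (hv : ContDiff ℝ 2 v) (p e : E) :
    deriv (deriv fun t : ℝ => v (p + t • e)) 0 = fderiv ℝ (fun y => fderiv ℝ v y e) p e := by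
  have hline : ∀ t : ℝ, HasDerivAt (fun t : ℝ => p + t • e) e t := fun t => by
    simpa using ((hasDerivAt_id t).smul_const e).const_add p
  have hfirst : deriv (fun t : ℝ => v (p + t • e)) = fun t => fderiv ℝ v (p + t • e) e := by
    funext t
    exact ((hv.differentiable (by norm_num) _).hasFDerivAt.comp_hasDerivAt t (hline t)).deriv
  have hv' : Differentiable ℝ fun y => fderiv ℝ v y e :=
    ((hv.fderiv_right (m := 1) (by norm_num)).clm_apply contDiff_const).differentiable
      (by norm_num)
  rw [hfirst]
  simpa [Function.comp_def] using ((hv' _).hasFDerivAt.comp_hasDerivAt 0 (hline 0)).deriv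

end LineRestriction

section Radial

variable {E : Type*} [NormedAddCommGroup E] [InnerProductSpace ℝ E]
open scoped RealInnerProductSpace

theorem hasFDerivAt_comp_norm_sub_sq {φ : ℝ → ℝ} {φ' : ℝ} {c x : E}
    (hφ : HasDerivAt φ φ' (‖x - c‖ ^ 2)) :
    HasFDerivAt (fun y => φ (‖y - c‖ ^ 2)) ((2 * φ') • innerSL ℝ (x - c)) x := by
  refine (hφ.comp_hasFDerivAt x ((hasFDerivAt_id x).sub_const c).norm_sq).congr_fderiv ?_
  ext e
  simp
  ring

theorem fderiv_fderiv_comp_norm_sub_sq_apply {φ φ' φ'' : ℝ → ℝ}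
    (hφ : ∀ s, HasDerivAt φ (φ' s) s) (hφ' : ∀ s, HasDerivAt φ' (φ'' s) s) (c x e : E) :
    fderiv ℝ (fun y => fderiv ℝ (fun z => φ (‖z - c‖ ^ 2)) y e) x e
      = 4 * φ'' (‖x - c‖ ^ 2) * ⟪x - c, e⟫ ^ 2 + 2 * φ' (‖x - c‖ ^ 2) * ‖e‖ ^ 2 := by
  have hfirst : (fun y => fderiv ℝ (fun z => φ (‖z - c‖ ^ 2)) y e)
      = fun y => 2 * φ' (‖y - c‖ ^ 2) * ⟪y - c, e⟫ := by
    funext y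
    simp [(hasFDerivAt_comp_norm_sub_sq (hφ _)).fderiv, mul_assoc, inner_sub_left]
  have hsub : HasFDerivAt (fun y : E => y - c) (ContinuousLinearMap.id ℝ E) x :=
    (hasFDerivAt_id x).sub_const c
  have hsecond := ((hasFDerivAt_comp_norm_sub_sq (c := c) (hφ' (‖x - c‖ ^ 2))).const_mul 2).fun_mul
    (hsub.inner ℝ (hasFDerivAt_const e x))
  rw [hfirst, hsecond.fderiv]
  simp [← inner_sub_left]
  ring

theorem lap_comp_norm_sub_sq {N : ℕ} {φ φ' φ'' : ℝ → ℝ}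
    (hφ : ∀ s, HasDerivAt φ (φ' s) s) (hφ' : ∀ s, HasDerivAt φ' (φ'' s) s)
    (c x : EuclideanSpace ℝ (Fin N)) :
    lap (fun y => φ (‖y - c‖ ^ 2)) x
      = 2 * N * φ' (‖x - c‖ ^ 2) + 4 * ‖x - c‖ ^ 2 * φ'' (‖x - c‖ ^ 2) := by
  simp only [lap, fderiv_fderiv_comp_norm_sub_sq_apply hφ hφ', EuclideanSpace.inner_single_right,
    PiLp.norm_single, EuclideanSpace.real_norm_sq_eq (x - c), Finset.sum_add_distrib,
    ← Finset.sum_mul, ← Finset.mul_sum]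
  simp
  ring

end Radial

section MaximumPrinciple

variable {N : ℕ}

theorem lap_nonpos_of_isLocalMax {v : EuclideanSpace ℝ (Fin N) → ℝ} (hv : ContDiff ℝ 2 v)
    {p : EuclideanSpace ℝ (Fin N)} (hmax : IsLocalMax v p) : lap v p ≤ 0 := by
  refine Finset.sum_nonpos fun i _ => ?_
  rw [← deriv_deriv_comp_line hv]
  have hline : Continuous fun t : ℝ => p + t • EuclideanSpace.single i (1 : ℝ) := by fun_prop
  exact deriv_deriv_nonpos_of_isLocalMax
    (IsLocalMax.comp_continuous (by simpa using hmax) hline.continuousAt)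
    (hv.continuous.comp hline).continuousAt

theorem lap_sub {u w : EuclideanSpace ℝ (Fin N) → ℝ} (hu : ContDiff ℝ 2 u)
    (hw : ContDiff ℝ 2 w) (x : EuclideanSpace ℝ (Fin N)) :
    lap (fun y => u y - w y) x = lap u x - lap w x := by
  simp only [lap, ← Finset.sum_sub_distrib]
  refine Finset.sum_congr rfl fun i _ => ?_
  set e := EuclideanSpace.single i (1 : ℝ)
  have hdiff : ∀ {f : EuclideanSpace ℝ (Fin N) → ℝ}, ContDiff ℝ 2 f →
      Differentiable ℝ fun y => fderiv ℝ f y e := fun hf =>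
    ((hf.fderiv_right (m := 1) (by norm_num)).clm_apply contDiff_const).differentiable
      (by norm_num)
  have hfirst : (fun y => fderiv ℝ (fun z => u z - w z) y e)
      = fun y => fderiv ℝ u y e - fderiv ℝ w y e := by
    funext y
    rw [fderiv_fun_sub (hu.differentiable (by norm_num) y) (hw.differentiable (by norm_num) y)]
    rfl
  rw [hfirst, fderiv_fun_sub (hdiff hu x) (hdiff hw x)]
  rfl

theorem le_on_closedBall_of_lap_lt {u w : EuclideanSpace ℝ (Fin N) → ℝ} (hu : ContDiff ℝ 2 u)
    (hw : ContDiff ℝ 2 w) {c : EuclideanSpace ℝ (Fin N)} {R : ℝ}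
    (hsphere : ∀ y ∈ sphere c R, u y ≤ w y)
    (hlap : ∀ y ∈ ball c R, w y < u y → lap w y < lap u y) :
    ∀ y ∈ closedBall c R, u y ≤ w y := by
  intro y hy
  obtain ⟨p, hpR, hpmax⟩ := (isCompact_closedBall c R).exists_isMaxOn ⟨y, hy⟩
    (hu.sub hw).continuous.continuousOn
  suffices hp : u p ≤ w p from sub_nonpos.1 ((hpmax hy).trans (sub_nonpos.2 hp))
  by_contra! hp
  rcases (show p ∈ ball c R ∪ sphere c R by rwa [ball_union_sphere]) with hpin | hpsph
  · have hloc : IsLocalMax (fun y => u y - w y) p :=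
      Filter.mem_of_superset (isOpen_ball.mem_nhds hpin)
        fun y hy => hpmax (ball_subset_closedBall hy)
    have hnonpos := lap_nonpos_of_isLocalMax (hu.sub hw) hloc
    rw [lap_sub hu hw] at hnonpos
    linarith [hlap p hpin hp]
  · linarith [hsphere p hpsph]

theorem le_mul_exp_of_mul_le_lap {u : EuclideanSpace ℝ (Fin N) → ℝ} (hu : ContDiff ℝ 2 u)
    {c : EuclideanSpace ℝ (Fin N)} {R κ μ M : ℝ} (hμ : 0 < μ)
    (hκμ : 2 * N * κ + 4 * κ ^ 2 * R ^ 2 ≤ μ) (hM : 0 ≤ M)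
    (hsphere : ∀ y ∈ sphere c R, u y ≤ M) (hsub : ∀ y ∈ ball c R, μ * u y ≤ lap u y) :
    ∀ y ∈ closedBall c R, u y ≤ M * exp (κ * (‖y - c‖ ^ 2 - R ^ 2)) := by
  set φ : ℝ → ℝ := fun s => M * exp (κ * (s - R ^ 2))
  have hφ : ∀ s, HasDerivAt φ (κ * φ s) s := fun s =>
    ((((hasDerivAt_id s).sub_const (R ^ 2)).const_mul κ).exp.const_mul M).congr_deriv
      (by simp only [φ, id]; ring)
  have hφ' : ∀ s, HasDerivAt (fun s => κ * φ s) (κ * (κ * φ s)) s := fun s => (hφ s).const_mul κ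
  have hw : ContDiff ℝ 2 fun y : EuclideanSpace ℝ (Fin N) => φ (‖y - c‖ ^ 2) := by
    have hsq := (contDiff_norm_sq ℝ (n := 2)).comp (contDiff_id.sub (contDiff_const (c := c)))
    exact contDiff_const.mul ((contDiff_const.mul (hsq.sub contDiff_const)).exp)
  refine le_on_closedBall_of_lap_lt hu hw (fun y hy => ?_) fun y hy hwu => ?_
  · simp [φ, mem_sphere_iff_norm.1 hy, hsphere y hy]
  · have hyR : ‖y - c‖ ^ 2 ≤ R ^ 2 :=
      pow_le_pow_left₀ (norm_nonneg _) (mem_ball_iff_norm.1 hy).le 2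
    have hφy : 0 ≤ φ (‖y - c‖ ^ 2) := by positivity
    calc lap (fun y => φ (‖y - c‖ ^ 2)) y
        = (2 * N * κ + 4 * κ ^ 2 * ‖y - c‖ ^ 2) * φ (‖y - c‖ ^ 2) := by
          rw [lap_comp_norm_sub_sq hφ hφ']
          ring
      _ ≤ μ * φ (‖y - c‖ ^ 2) := by
          gcongr
          nlinarith [sq_nonneg κ]
      _ < μ * u y := by gcongr
      _ ≤ lap u y := hsub y hy

end MaximumPrinciple

theorem mul_le_half_inv_mul_deriv_div {Φ : ℝ → ℝ} {c₁ θ₁ ε a : ℝ} (hc₁ : 0 < c₁) (hε : 0 < ε)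
    (hΦ : ∀ s ∈ Icc (0 : ℝ) θ₁, (1 / c₁) * s ≤ (1 / 2) * deriv Φ s)
    (ha : a ∈ Icc 0 (θ₁ * ε)) :
    1 / (c₁ * ε ^ 2) * a ≤ (1 / 2) * ((1 / ε) * deriv Φ (a / ε)) := by
  have has : a / ε ∈ Icc 0 θ₁ := ⟨div_nonneg ha.1 hε.le, (div_le_iff₀ hε).2 ha.2⟩
  calc 1 / (c₁ * ε ^ 2) * a = (1 / ε) * ((1 / c₁) * (a / ε)) := by field_simp
    _ ≤ (1 / ε) * ((1 / 2) * deriv Φ (a / ε)) :=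
        mul_le_mul_of_nonneg_left (hΦ _ has) (by positivity)
    _ = (1 / 2) * ((1 / ε) * deriv Φ (a / ε)) := by ring

theorem le_mul_exp_of_semilinear {N : ℕ} {c₁ θ₁ t : ℝ} {Φ : ℝ → ℝ}
    {u : EuclideanSpace ℝ (Fin N) → ℝ} {x₀ : EuclideanSpace ℝ (Fin N)} (hc₁ : 0 < c₁)
    (hθ₁ : 0 ≤ θ₁) (ht : 0 < t) (hNt : 6 * N * √c₁ * t ≤ 5)
    (hΦ : ∀ s ∈ Icc (0 : ℝ) θ₁, (1 / c₁) * s ≤ (1 / 2) * deriv Φ s)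
    (hu : ContDiff ℝ 2 u) (hu0 : ∀ x, 0 ≤ u x)
    (hpde : ∀ x ∈ ball x₀ (t ^ 3), lap u x = (1 / 2) * ((1 / t ^ 4) * deriv Φ (u x / t ^ 4)))
    (hball : ball x₀ (t ^ 3) ⊆ {x | u x ≤ θ₁ * t ^ 4}) :
    ∀ x ∈ ball x₀ (t ^ 3 / 2), u x ≤ θ₁ * t ^ 4 * exp (-t⁻¹ / (4 * √c₁)) := by
  have hq : 0 < √c₁ := Real.sqrt_pos.2 hc₁
  intro x hx
  have hdecay := le_mul_exp_of_mul_le_lap hu (c := x₀) (R := t ^ 3) (M := θ₁ * t ^ 4)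
    (κ := 1 / (3 * √c₁ * t ^ 7)) (μ := 1 / (c₁ * (t ^ 4) ^ 2)) (by positivity) ?_
    (by positivity) (fun y hy => ?_) (fun y hy => ?_) x
    (ball_subset_closedBall (ball_subset_ball (by linarith [pow_pos ht 3]) hx))
  · have hxx₀ : ‖x - x₀‖ ^ 2 ≤ (t ^ 3 / 2) ^ 2 :=
      pow_le_pow_left₀ (norm_nonneg _) (mem_ball_iff_norm.1 hx).le 2
    calc u x ≤ θ₁ * t ^ 4 * exp (1 / (3 * √c₁ * t ^ 7) * (‖x - x₀‖ ^ 2 - (t ^ 3) ^ 2)) := hdecay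
      _ ≤ θ₁ * t ^ 4 * exp (1 / (3 * √c₁ * t ^ 7) * ((t ^ 3 / 2) ^ 2 - (t ^ 3) ^ 2)) := by
          gcongr
      _ = θ₁ * t ^ 4 * exp (-t⁻¹ / (4 * √c₁)) := by congr 2; field_simp; ring
  · have hqc := Real.sq_sqrt hc₁.le
    field_simp
    nlinarith
  · refine closure_minimal hball (isClosed_le hu.continuous continuous_const) ?_
    rw [closure_ball x₀ (by positivity)]
    exact sphere_subset_closedBall hy
  · rw [hpde y hy]
    exact mul_le_half_inv_mul_deriv_div hc₁ (by positivity) hΦ ⟨hu0 y, hball hy⟩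

theorem statement11_general
    (N : ℕ) (c₁ : ℝ) (hc₁ : 0 < c₁) :
    ∃ ε₀ ∈ Ioo (0:ℝ) 1,
      ∀ θ₁ : ℝ, 0 < θ₁ →
      ∀ Φ : ℝ → ℝ, ContDiff ℝ 1 Φ →
        (∀ s ∈ Icc (0:ℝ) θ₁,
          (1/c₁) * s ≤ (1/2) * deriv Φ s ∧ (1/2) * deriv Φ s ≤ c₁ * s) →
      ∀ ε : ℝ, ε ∈ Ioo (0:ℝ) ε₀ →
      ∀ u : EuclideanSpace ℝ (Fin N) → ℝ, ContDiff ℝ 2 u → (∀ x, 0 ≤ u x) →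
      ∀ x₀ : EuclideanSpace ℝ (Fin N),
        (∀ x ∈ ball x₀ (ε ^ ((3:ℝ)/4)), lap u x = (1/2) * ((1/ε) * deriv Φ (u x / ε))) →
        u x₀ ≤ θ₁ * ε →
        (ball x₀ (ε ^ ((3:ℝ)/4)) ⊆ {x | u x ≤ θ₁ * ε}) →
        ∀ x ∈ ball x₀ (ε ^ ((3:ℝ)/4) / 2),
          u x ≤ 3 * θ₁ * ε * Real.exp (-(ε ^ (-(1:ℝ)/4)) / (4 * Real.sqrt c₁)) := by
  have hq : 0 < √c₁ := Real.sqrt_pos.2 hc₁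
  have hNq : 0 ≤ 2 * N * √c₁ := by positivity
  refine ⟨(2 * N * √c₁ + 2)⁻¹ ^ 4,
    ⟨by positivity, pow_lt_one₀ (by positivity) (inv_lt_one_of_one_lt₀ (by linarith)) four_ne_zero⟩,
    ?_⟩
  intro θ₁ hθ₁ Φ _ hΦ ε ⟨hε, hεε₀⟩ u hu hu0 x₀ hpde _ hball x hx
  obtain ⟨t, ht, rfl⟩ : ∃ t : ℝ, 0 < t ∧ ε = t ^ 4 :=
    ⟨ε ^ (1 / 4 : ℝ), by positivity, by rw [← Real.rpow_natCast, ← Real.rpow_mul hε.le]; norm_num⟩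
  have htε₀ : t * (2 * N * √c₁ + 2) < 1 := by
    have := (pow_lt_pow_iff_left₀ ht.le (by positivity) four_ne_zero).1 hεε₀
    rwa [← one_div, lt_div_iff₀ (by positivity)] at this
  have hR : (t ^ 4) ^ ((3 : ℝ) / 4) = t ^ 3 := by
    rw [← Real.rpow_natCast_mul ht.le]; norm_num
  have hσ : (t ^ 4) ^ (-(1 : ℝ) / 4) = t⁻¹ := by
    rw [← Real.rpow_natCast_mul ht.le]; norm_num [Real.rpow_neg_one]
  rw [hR] at hpde hball hx
  rw [hσ]
  have hdecay := le_mul_exp_of_semilinear hc₁ hθ₁.le ht (by nlinarith) (fun s hs => (hΦ s hs).1)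
    hu hu0 hpde hball x hx
  have hpos : 0 ≤ θ₁ * t ^ 4 * exp (-t⁻¹ / (4 * √c₁)) := by positivity
  linarith

/-- exponential decay of solutions of Δu = (1/2)Φ'_ε(u) in the region
{u ≤ θ₁ε}: there is ε₀ ∈ (0,1), depending only on N and c₁, such that if
B_{ε^{3/4}}(x₀) ⊆ {u ≤ θ₁ε}, then u ≤ 3θ₁ε·e^{−ε^{−1/4}/(4√c₁)} on B_{ε^{3/4}/2}(x₀). -/
theorem statement11
    (N : ℕ) (hN : 1 ≤ N) (c₁ : ℝ) (hc₁ : 0 < c₁) :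
    ∃ ε₀ ∈ Ioo (0:ℝ) 1,
      ∀ θ₁ : ℝ, 0 < θ₁ →
      ∀ Φ : ℝ → ℝ, ContDiff ℝ 1 Φ →
        (∀ s ∈ Icc (0:ℝ) θ₁,
          (1/c₁) * s ≤ (1/2) * deriv Φ s ∧ (1/2) * deriv Φ s ≤ c₁ * s) →
      ∀ ε : ℝ, ε ∈ Ioo (0:ℝ) ε₀ →
      ∀ u : EuclideanSpace ℝ (Fin N) → ℝ, ContDiff ℝ 2 u → (∀ x, 0 ≤ u x) →
      ∀ x₀ : EuclideanSpace ℝ (Fin N),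
        (∀ x ∈ ball x₀ (ε ^ ((3:ℝ)/4)), lap u x = (1/2) * ((1/ε) * deriv Φ (u x / ε))) →
        u x₀ ≤ θ₁ * ε →
        (ball x₀ (ε ^ ((3:ℝ)/4)) ⊆ {x | u x ≤ θ₁ * ε}) →
        ∀ x ∈ ball x₀ (ε ^ ((3:ℝ)/4) / 2),
          u x ≤ 3 * θ₁ * ε * Real.exp (-(ε ^ (-(1:ℝ)/4)) / (4 * Real.sqrt c₁)) :=
  statement11_general N c₁ hc₁
end

section
/- Let ω: (0,∞) → [0,∞) satisfy ω(r/2) ≤ max{ε/r, ω(r)}^{1+σ} whenever ε/r ∈ (0, ω₀), for fixed σ ∈ (0,1), ω₀ ∈ (0,1/4). Suppose ε ≤ ω₀ and ω(1) ≤ ω₀. Then for every k ∈ ℕ with 2^k ε ≤ ω₀, either ω(2^{−k}) ≤ (2^k ε)^{1+σ} or ω(2^{−k}) ≤ ω(1)^{(1+σ)^k}. -/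
open Real Set Filter

/-!
The two alternatives are carried through the iteration as the single bound
`ω(2^{-k}) ≤ max ((2^k ε)^p, ω(1)^{p^k})` with `p = 1 + σ`. Since `2^k ε ≤ 1` and `p ≥ 1`, the first
entry is at most `2^k ε`, so this bound gives `max (2^k ε, ω(2^{-k})) ≤ max (2^k ε, ω(1)^{p^k})`;
raising to the power `p` then reproduces the bound at the next scale, because `2^k ε ≤ 2^{k+1} ε`.
-/

lemma max_rpow_le_of_le_max_rpow {a b x p : ℝ} (hp : 1 ≤ p) (ha₀ : 0 ≤ a) (ha₁ : a ≤ 1)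
    (hb : 0 ≤ b) (hx : x ≤ max (a ^ p) b) :
    max a x ^ p ≤ max (a ^ p) (b ^ p) := by
  have hax : max a x ≤ max a b :=
    max_le (le_max_left a b) (hx.trans (max_le_max_right b (rpow_le_self_of_le_one ha₀ ha₁ hp)))
  calc max a x ^ p ≤ max a b ^ p := rpow_le_rpow (ha₀.trans (le_max_left a x)) hax (by linarith)
    _ = max (a ^ p) (b ^ p) := rpow_max ha₀ hb (by linarith)

theorem le_max_of_dyadic_iteration {ω : ℝ → ℝ} {p ω₀ ε : ℝ} (hp : 1 ≤ p) (hω₀ : ω₀ ≤ 1)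
    (hε : 0 < ε) (hω₁ : 0 ≤ ω 1)
    (hiter : ∀ r : ℝ, 0 < r → ε / r < ω₀ → ω (r / 2) ≤ max (ε / r) (ω r) ^ p) :
    ∀ k : ℕ, (2:ℝ) ^ k * ε ≤ ω₀ →
      ω ((1/2 : ℝ) ^ k) ≤ max (((2:ℝ) ^ k * ε) ^ p) (ω 1 ^ (p ^ k)) := by
  intro k
  induction k with
  | zero => simp
  | succ k ih =>
    intro hk
    set a := (2:ℝ) ^ k * ε
    have ha₀ : 0 < a := by positivity
    have ha_succ : (2:ℝ) ^ (k + 1) * ε = 2 * a := by ring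
    have ha_lt : a < ω₀ := by linarith
    have hscale : ε / (1/2 : ℝ) ^ k = a := by
      rw [one_div, inv_pow, div_inv_eq_mul, mul_comm]
    have hstep := hiter _ (by positivity) (hscale ▸ ha_lt)
    have hhalf : (1/2 : ℝ) ^ k / 2 = (1/2 : ℝ) ^ (k + 1) := by ring
    rw [hscale, hhalf] at hstep
    calc ω ((1/2 : ℝ) ^ (k + 1)) ≤ max a (ω ((1/2 : ℝ) ^ k)) ^ p := hstep
      _ ≤ max (a ^ p) ((ω 1 ^ p ^ k) ^ p) :=
        max_rpow_le_of_le_max_rpow hp ha₀.le (by linarith) (by positivity) (ih ha_lt.le)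
      _ ≤ max (((2:ℝ) ^ (k + 1) * ε) ^ p) (ω 1 ^ p ^ (k + 1)) := by
        rw [← rpow_mul hω₁, ← pow_succ, ha_succ]
        gcongr
        linarith

theorem statement18_general
    (σ ω₀ ε : ℝ) (hσ : σ ∈ Ioo (0:ℝ) 1) (hω₀ : ω₀ ∈ Ioo (0:ℝ) (1/4))
    (ω : ℝ → ℝ) (hωnonneg : ∀ r, 0 < r → 0 ≤ ω r)
    (hε : 0 < ε)
    (hiter : ∀ r : ℝ, 0 < r → ε / r < ω₀ →
        ω (r / 2) ≤ (max (ε / r) (ω r)) ^ ((1:ℝ) + σ)) :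
    ∀ k : ℕ, (2:ℝ)^k * ε ≤ ω₀ →
      ω ((1/2 : ℝ)^k) ≤ ((2:ℝ)^k * ε) ^ ((1:ℝ) + σ) ∨
      ω ((1/2 : ℝ)^k) ≤ (ω 1) ^ (((1:ℝ) + σ)^k) := by
  intro k hk
  rw [← le_max_iff]
  exact le_max_of_dyadic_iteration (by linarith [hσ.1]) (by linarith [hω₀.2]) hε
    (hωnonneg 1 one_pos) hiter k hk

/-- dyadic iteration of the decay inequality
ω(r/2) ≤ max{ε/r, ω(r)}^{1+σ}: for every k with 2^k ε ≤ ω₀, either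
ω(2^{−k}) ≤ (2^k ε)^{1+σ} or ω(2^{−k}) ≤ ω(1)^{(1+σ)^k}. -/
theorem statement18
    (σ ω₀ ε : ℝ) (hσ : σ ∈ Ioo (0:ℝ) 1) (hω₀ : ω₀ ∈ Ioo (0:ℝ) (1/4))
    (ω : ℝ → ℝ) (hωnonneg : ∀ r, 0 < r → 0 ≤ ω r)
    (hε : 0 < ε) (hεω₀ : ε ≤ ω₀) (hω1 : ω 1 ≤ ω₀)
    (hiter : ∀ r : ℝ, 0 < r → ε / r < ω₀ →
        ω (r / 2) ≤ (max (ε / r) (ω r)) ^ ((1:ℝ) + σ)) :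
    ∀ k : ℕ, (2:ℝ)^k * ε ≤ ω₀ →
      ω ((1/2 : ℝ)^k) ≤ ((2:ℝ)^k * ε) ^ ((1:ℝ) + σ) ∨
      ω ((1/2 : ℝ)^k) ≤ (ω 1) ^ (((1:ℝ) + σ)^k) :=
  statement18_general σ ω₀ ε hσ hω₀ ω hωnonneg hε hiter
end
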